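/- Let g(z) = −log(1 − Φ(z)). Then for every z > 0, g is twice differentiable at z with second derivative g''(z) = φ(z)·(φ(z) − z·(1 − Φ(z)))/(1 − Φ(z))², and this second derivative is strictly positive. -/

import Mathlib

open MeasureTheory ProbabilityTheory Real Set Filter

/-- The standard normal density φ(t) = (1/√(2π))·exp(−t²/2). -/
noncomputable def stdNormalPDF (t : ℝ) : ℝ :=
  (Real.sqrt (2 * Real.pi))⁻¹ * Real.exp (-t ^ 2 / 2)

/-- The standard normal cumulative distribution function Φ(t) = ∫_{−∞}^t φ(s) ds. -/
noncomputable def stdNormalCDF (t : ℝ) : ℝ :=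
  ∫ s in Set.Iic t, stdNormalPDF s

/-- g(z) = −log(1 − Φ(z)). -/
noncomputable def g (z : ℝ) : ℝ := -Real.log (1 - stdNormalCDF z)

/-!
Since Φ' = φ and φ' = −tφ, we have g' = φ / (1 − Φ), and the quotient rule gives the formula
for g''. Its sign is that of φ(z) − z (1 − Φ(z)), which equals ∫_z^∞ (t − z) φ(t) dt because
∫_z^∞ t φ(t) dt = φ(z); the integrand is positive on (z, ∞).
-/

lemma stdNormalPDF_eq_gaussianPDFReal : stdNormalPDF = gaussianPDFReal 0 1 := by
  funext t
  simp [stdNormalPDF, gaussianPDFReal]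

lemma stdNormalPDF_pos (t : ℝ) : 0 < stdNormalPDF t := by
  rw [stdNormalPDF_eq_gaussianPDFReal]
  exact gaussianPDFReal_pos _ _ _ one_ne_zero

lemma continuous_stdNormalPDF : Continuous stdNormalPDF := by
  unfold stdNormalPDF
  fun_prop

lemma integrable_stdNormalPDF : Integrable stdNormalPDF := by
  rw [stdNormalPDF_eq_gaussianPDFReal]
  exact integrable_gaussianPDFReal _ _

lemma integrable_mul_stdNormalPDF : Integrable fun t ↦ t * stdNormalPDF t := by
  refine ((integrable_mul_exp_neg_mul_sq one_half_pos).const_mul (√(2 * π))⁻¹).congr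
    (Eventually.of_forall fun t ↦ ?_)
  simp only [stdNormalPDF]
  ring_nf

lemma hasDerivAt_stdNormalPDF (t : ℝ) : HasDerivAt stdNormalPDF (-t * stdNormalPDF t) t := by
  have hexponent : HasDerivAt (fun t : ℝ ↦ -t ^ 2 / 2) (-t) t :=
    ((hasDerivAt_pow 2 t).neg.div_const 2).congr_deriv (by ring)
  refine (hexponent.exp.const_mul (√(2 * π))⁻¹).congr_deriv ?_
  simp only [stdNormalPDF]
  ring

lemma tendsto_stdNormalPDF_atTop : Tendsto stdNormalPDF atTop (nhds 0) := by
  have h : Tendsto (fun t : ℝ ↦ -t ^ 2 / 2) atTop atBot :=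
    (tendsto_neg_atBot_iff.2 (tendsto_pow_atTop two_ne_zero)).atBot_div_const two_pos
  rw [← mul_zero (√(2 * π))⁻¹]
  exact (tendsto_exp_atBot.comp h).const_mul _

lemma setIntegral_Ioi_pos {f : ℝ → ℝ} {a : ℝ} (hf : IntegrableOn f (Ioi a))
    (hpos : ∀ t ∈ Ioi a, 0 < f t) : 0 < ∫ t in Ioi a, f t := by
  have hnonneg : 0 ≤ᵐ[volume.restrict (Ioi a)] f := by
    filter_upwards [ae_restrict_mem measurableSet_Ioi] with t ht
    exact (hpos t ht).le
  rw [setIntegral_pos_iff_support_of_nonneg_ae hnonneg hf]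
  calc (0 : ENNReal) < volume (Ioi a) := by simp
    _ ≤ volume (Function.support f ∩ Ioi a) :=
      measure_mono fun t ht ↦ ⟨(hpos t ht).ne', ht⟩

lemma one_sub_stdNormalCDF_eq_integral_Ioi (z : ℝ) :
    1 - stdNormalCDF z = ∫ t in Ioi z, stdNormalPDF t := by
  have h := integral_add_compl (measurableSet_Iic (a := z)) integrable_stdNormalPDF
  rw [compl_Iic, stdNormalPDF_eq_gaussianPDFReal,
    integral_gaussianPDFReal_eq_one 0 one_ne_zero] at h
  rw [stdNormalCDF, stdNormalPDF_eq_gaussianPDFReal, ← h]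
  ring

lemma one_sub_stdNormalCDF_pos (z : ℝ) : 0 < 1 - stdNormalCDF z := by
  rw [one_sub_stdNormalCDF_eq_integral_Ioi]
  exact setIntegral_Ioi_pos integrable_stdNormalPDF.integrableOn fun t _ ↦ stdNormalPDF_pos t

lemma hasDerivAt_stdNormalCDF (z : ℝ) : HasDerivAt stdNormalCDF (stdNormalPDF z) z := by
  have hcdf : ∀ t, stdNormalCDF 0 + ∫ s in (0 : ℝ)..t, stdNormalPDF s = stdNormalCDF t := by
    intro t
    rw [← intervalIntegral.integral_Iic_sub_Iic integrable_stdNormalPDF.integrableOn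
      integrable_stdNormalPDF.integrableOn, stdNormalCDF, stdNormalCDF]
    ring
  rw [← funext hcdf]
  exact (intervalIntegral.integral_hasDerivAt_right integrable_stdNormalPDF.intervalIntegrable
    (continuous_stdNormalPDF.stronglyMeasurableAtFilter _ _)
    continuous_stdNormalPDF.continuousAt).const_add _

lemma integral_Ioi_mul_stdNormalPDF (z : ℝ) :
    ∫ t in Ioi z, t * stdNormalPDF t = stdNormalPDF z := by
  have hderiv : ∀ t ∈ Ioi z, HasDerivAt (fun t ↦ -stdNormalPDF t) (t * stdNormalPDF t) t :=
    fun t _ ↦ (hasDerivAt_stdNormalPDF t).neg.congr_deriv (by ring)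
  rw [integral_Ioi_of_hasDerivAt_of_tendsto (f := fun t ↦ -stdNormalPDF t)
    continuous_stdNormalPDF.neg.continuousWithinAt hderiv integrable_mul_stdNormalPDF.integrableOn
    (by simpa using tendsto_stdNormalPDF_atTop.neg)]
  ring

lemma integral_Ioi_sub_mul_stdNormalPDF (z : ℝ) :
    ∫ t in Ioi z, (t - z) * stdNormalPDF t = stdNormalPDF z - z * (1 - stdNormalCDF z) := by
  simp_rw [sub_mul]
  rw [integral_sub integrable_mul_stdNormalPDF.integrableOn
    (integrable_stdNormalPDF.const_mul z).integrableOn, integral_const_mul,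
    integral_Ioi_mul_stdNormalPDF, one_sub_stdNormalCDF_eq_integral_Ioi]

lemma mul_one_sub_stdNormalCDF_lt_stdNormalPDF (z : ℝ) :
    z * (1 - stdNormalCDF z) < stdNormalPDF z := by
  have hint : Integrable fun t ↦ (t - z) * stdNormalPDF t := by
    simp_rw [sub_mul]
    exact integrable_mul_stdNormalPDF.sub (integrable_stdNormalPDF.const_mul z)
  rw [← sub_pos, ← integral_Ioi_sub_mul_stdNormalPDF]
  exact setIntegral_Ioi_pos hint.integrableOn fun t ht ↦
    mul_pos (sub_pos.2 ht) (stdNormalPDF_pos t)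

lemma hasDerivAt_g (z : ℝ) : HasDerivAt g (stdNormalPDF z / (1 - stdNormalCDF z)) z :=
  (((hasDerivAt_stdNormalCDF z).const_sub 1).log (one_sub_stdNormalCDF_pos z).ne').neg.congr_deriv
    (by ring)

theorem stmt_1_general (z : ℝ) :
    DifferentiableAt ℝ g z ∧
    HasDerivAt (deriv g)
      (stdNormalPDF z * (stdNormalPDF z - z * (1 - stdNormalCDF z)) /
        (1 - stdNormalCDF z) ^ 2) z ∧
    0 < stdNormalPDF z * (stdNormalPDF z - z * (1 - stdNormalCDF z)) /
        (1 - stdNormalCDF z) ^ 2 := by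
  have hderiv : deriv g = fun x ↦ stdNormalPDF x / (1 - stdNormalCDF x) :=
    funext fun x ↦ (hasDerivAt_g x).deriv
  refine ⟨(hasDerivAt_g z).differentiableAt, ?_, ?_⟩
  · rw [hderiv]
    exact ((hasDerivAt_stdNormalPDF z).div ((hasDerivAt_stdNormalCDF z).const_sub 1)
      (one_sub_stdNormalCDF_pos z).ne').congr_deriv (by ring)
  · have hmills := sub_pos.2 (mul_one_sub_stdNormalCDF_lt_stdNormalPDF z)
    exact div_pos (mul_pos (stdNormalPDF_pos z) hmills) (pow_pos (one_sub_stdNormalCDF_pos z) 2)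

/-- For every z > 0, g is twice differentiable at z with second derivative
g''(z) = φ(z)·(φ(z) − z·(1 − Φ(z)))/(1 − Φ(z))², and this second derivative is
strictly positive. -/
theorem stmt_1 (z : ℝ) (hz : 0 < z) :
    DifferentiableAt ℝ g z ∧
    HasDerivAt (deriv g)
      (stdNormalPDF z * (stdNormalPDF z - z * (1 - stdNormalCDF z)) /
        (1 - stdNormalCDF z) ^ 2) z ∧
    0 < stdNormalPDF z * (stdNormalPDF z - z * (1 - stdNormalCDF z)) /
        (1 - stdNormalCDF z) ^ 2 :=
  stmt_1_general z
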